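/- arXiv:1903.00906 — 4 statements merged into one kernel-verified Lean document; each statement's English description precedes it below -/
import Mathlib

section
/- Consider the 2-dimensional recurrence with state (s¹_t, s²_t), inputs x^I_t ∈ {-1,1}, flag bits x^F_t ∈ {0,1} with x^F_t = 1 exactly when t = L (for some 1 ≤ L ≤ n−1), defined by s¹_t = g(s¹_{t-1} + b₁ s²_{t-1} + b₁) and s²_t = g(W₂₁ x^I_t − b₂ x^F_t + b₂), with g(x)=max(-1,min(1,x)), initial state s¹_0 = 0, s²_0 = -1, and parameters satisfying W₂₁ ∈ (0,1), b₂ < 0, W₂₁ + b₂ < -1, −W₂₁ + b₂ < −1, b₁ ≠ 0, b₁(1+W₂₁) ∈ (-1,1), b₁(1−W₂₁) ∈ (-1,1). Then for all t with L+1 ≤ t ≤ n, s¹_t = b₁(1 + W₂₁ x^I_L). In particular the final memorization state determines the sign of the flagged information bit x^I_L. -/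
/-! Away from the flagged step the second unit saturates at `-1`, which cancels the bias `b₁` in
the first unit, so `s¹` is frozen: it is `0` up to time `L`. At time `L` the flag switches the
second unit to its linear regime, `s²_L = W₂₁ x^I_L`, and `s¹_{L+1} = b₁ (1 + W₂₁ x^I_L)` lies
strictly inside the linear range of `hardSat`; from then on `s¹` is frozen again. -/

noncomputable def hardSat (x : ℝ) : ℝ := max (-1) (min 1 x)

lemma hardSat_of_mem_Icc {x : ℝ} (hx : x ∈ Set.Icc (-1) 1) : hardSat x = x := by
  rw [hardSat, min_eq_right hx.2, max_eq_right hx.1]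

lemma hardSat_of_le_neg_one {x : ℝ} (hx : x ≤ -1) : hardSat x = -1 := by
  rw [hardSat, min_eq_right (by linarith), max_eq_left hx]

lemma hardSat_mem_Icc (x : ℝ) : hardSat x ∈ Set.Icc (-1) 1 :=
  ⟨le_max_left _ _, max_le (by norm_num) (min_le_left _ _)⟩

lemma hardSat_add_mul_neg_one_add {s : ℝ} (b : ℝ) (hs : s ∈ Set.Icc (-1) 1) :
    hardSat (s + b * -1 + b) = s := by
  rw [show s + b * -1 + b = s by ring, hardSat_of_mem_Icc hs]

lemma mul_add_le_neg_one_of_sign {w c x : ℝ} (hx : x = -1 ∨ x = 1)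
    (hpos : w + c < -1) (hneg : -w + c < -1) : w * x + c ≤ -1 := by
  rcases hx with rfl | rfl <;> linarith

lemma mul_sign_mem_Icc {w x : ℝ} (hx : x = -1 ∨ x = 1) (hw : w ∈ Set.Ioo 0 1) :
    w * x ∈ Set.Icc (-1) 1 := by
  rcases hx with rfl | rfl <;> constructor <;> linarith [hw.1, hw.2]

lemma mul_one_add_mul_sign_mem_Icc {b w x : ℝ} (hx : x = -1 ∨ x = 1)
    (hp : b * (1 + w) ∈ Set.Ioo (-1) 1) (hm : b * (1 - w) ∈ Set.Ioo (-1) 1) :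
    b * (1 + w * x) ∈ Set.Icc (-1) 1 := by
  rcases hx with rfl | rfl <;> constructor <;> linarith [hp.1, hp.2, hm.1, hm.2]

lemma eq_of_succ_eq_on_Icc {α : Type*} {f : ℕ → α} {a b : ℕ}
    (h : ∀ t, a ≤ t → t < b → f (t + 1) = f t) {t : ℕ} (hat : a ≤ t) (htb : t ≤ b) :
    f t = f a := by
  induction t, hat using Nat.le_induction with
  | base => rfl
  | succ t hat ih => rw [h t hat (by omega), ih (by omega)]

theorem rnn2d_passes_F1B_general
    (n L : ℕ) (hL1 : 1 ≤ L)
    (W21 b1 b2 : ℝ)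
    (hW : W21 ∈ Set.Ioo (0 : ℝ) 1)
    (hsat1 : W21 + b2 < -1) (hsat2 : -W21 + b2 < -1)
    (hp : b1 * (1 + W21) ∈ Set.Ioo (-1 : ℝ) 1)
    (hm : b1 * (1 - W21) ∈ Set.Ioo (-1 : ℝ) 1)
    (xI xF : ℕ → ℝ)
    (hxI : ∀ t, xI t = -1 ∨ xI t = 1)
    (hxF : ∀ t, xF t = if t = L then 1 else 0)
    (s1 s2 : ℕ → ℝ)
    (hs10 : s1 0 = 0) (hs20 : s2 0 = -1)
    (hrec1 : ∀ t, 1 ≤ t → s1 t = hardSat (s1 (t - 1) + b1 * s2 (t - 1) + b1))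
    (hrec2 : ∀ t, 1 ≤ t → s2 t = hardSat (W21 * xI t - b2 * xF t + b2)) :
    ∀ t, L + 1 ≤ t → t ≤ n → s1 t = b1 * (1 + W21 * xI L) := by
  have hrec1_succ (t : ℕ) : s1 (t + 1) = hardSat (s1 t + b1 * s2 t + b1) := by
    simpa using hrec1 (t + 1) (by omega)
  have hs1_mem (t : ℕ) : s1 t ∈ Set.Icc (-1) 1 := by
    cases t with
    | zero => rw [hs10]; norm_num
    | succ t => rw [hrec1_succ]; exact hardSat_mem_Icc _
  have hs2_off (t : ℕ) (ht : t ≠ L) : s2 t = -1 := by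
    rcases Nat.eq_zero_or_pos t with rfl | hpos
    · exact hs20
    · rw [hrec2 t hpos, hxF t, if_neg ht, mul_zero, sub_zero]
      exact hardSat_of_le_neg_one (mul_add_le_neg_one_of_sign (hxI t) hsat1 hsat2)
  have hfrozen (t : ℕ) (ht : t ≠ L) : s1 (t + 1) = s1 t := by
    rw [hrec1_succ, hs2_off t ht, hardSat_add_mul_neg_one_add b1 (hs1_mem t)]
  have hs1L : s1 L = 0 :=
    (eq_of_succ_eq_on_Icc (fun t _ htL => hfrozen t htL.ne) (Nat.zero_le L) le_rfl).trans hs10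
  have hs2L : s2 L = W21 * xI L := by
    rw [hrec2 L hL1, hxF L, if_pos rfl, mul_one, sub_add_cancel]
    exact hardSat_of_mem_Icc (mul_sign_mem_Icc (hxI L) hW)
  have hcapture : s1 (L + 1) = b1 * (1 + W21 * xI L) := by
    rw [hrec1_succ, hs1L, hs2L, show 0 + b1 * (W21 * xI L) + b1 = b1 * (1 + W21 * xI L) by ring]
    exact hardSat_of_mem_Icc (mul_one_add_mul_sign_mem_Icc (hxI L) hp hm)
  intro t ht htn
  rw [eq_of_succ_eq_on_Icc (fun t ht _ => hfrozen t (by omega)) ht htn, hcapture]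

theorem rnn2d_passes_F1B
    (n L : ℕ) (hL1 : 1 ≤ L) (hLn : L ≤ n - 1) (hn : 2 ≤ n)
    (W21 b1 b2 : ℝ)
    (hW : W21 ∈ Set.Ioo (0 : ℝ) 1) (hb2 : b2 < 0)
    (hsat1 : W21 + b2 < -1) (hsat2 : -W21 + b2 < -1)
    (hb1 : b1 ≠ 0)
    (hp : b1 * (1 + W21) ∈ Set.Ioo (-1 : ℝ) 1)
    (hm : b1 * (1 - W21) ∈ Set.Ioo (-1 : ℝ) 1)
    (xI xF : ℕ → ℝ)
    (hxI : ∀ t, xI t = -1 ∨ xI t = 1)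
    (hxF : ∀ t, xF t = if t = L then 1 else 0)
    (s1 s2 : ℕ → ℝ)
    (hs10 : s1 0 = 0) (hs20 : s2 0 = -1)
    (hrec1 : ∀ t, 1 ≤ t → s1 t = hardSat (s1 (t - 1) + b1 * s2 (t - 1) + b1))
    (hrec2 : ∀ t, 1 ≤ t → s2 t = hardSat (W21 * xI t - b2 * xF t + b2)) :
    ∀ t, L + 1 ≤ t → t ≤ n → s1 t = b1 * (1 + W21 * xI L) :=
  rnn2d_passes_F1B_general n L hL1 W21 b1 b2 hW hsat1 hsat2 hp hm xI xF hxI hxF s1 s2 hs10 hs20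
    hrec1 hrec2
end

section
/- In the setting of the previous construction (2-dim Vanilla RNN with hard-saturation activation and the stated parameter constraints), for all t ≤ L one has s¹_t = 0 and, for all t < L, s²_t = -1. -/
lemma hardSat_zero : hardSat 0 = 0 := by
  norm_num [hardSat]

lemma hardSat_eq_neg_one_of_le {x : ℝ} (h : x ≤ -1) : hardSat x = -1 := by
  rw [hardSat, min_eq_right (by linarith), max_eq_left h]

lemma hardSat_mul_sign_add_eq_neg_one {w b x : ℝ} (hx : x = -1 ∨ x = 1)
    (hpos : w + b < -1) (hneg : -w + b < -1) : hardSat (w * x + b) = -1 := by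
  apply hardSat_eq_neg_one_of_le
  rcases hx with rfl | rfl <;> linarith

theorem rnn2d_noise_suppression_general
    (L : ℕ)
    (W21 b1 b2 : ℝ)
    (hsat1 : W21 + b2 < -1) (hsat2 : -W21 + b2 < -1)
    (xI xF : ℕ → ℝ)
    (hxI : ∀ t, xI t = -1 ∨ xI t = 1)
    (hxF : ∀ t, xF t = if t = L then 1 else 0)
    (s1 s2 : ℕ → ℝ)
    (hs10 : s1 0 = 0) (hs20 : s2 0 = -1)
    (hrec1 : ∀ t, 1 ≤ t → s1 t = hardSat (s1 (t - 1) + b1 * s2 (t - 1) + b1))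
    (hrec2 : ∀ t, 1 ≤ t → s2 t = hardSat (W21 * xI t - b2 * xF t + b2)) :
    (∀ t, t ≤ L → s1 t = 0) ∧ (∀ t, t < L → s2 t = -1) := by
  have hs2 : ∀ t, t < L → s2 t = -1 := by
    intro t ht
    rcases Nat.eq_zero_or_pos t with rfl | ht0
    · exact hs20
    rw [hrec2 t ht0, hxF t, if_neg ht.ne, mul_zero, sub_zero]
    exact hardSat_mul_sign_add_eq_neg_one (hxI t) hsat1 hsat2
  refine ⟨fun t ht => ?_, hs2⟩
  induction t with
  | zero => exact hs10
  | succ k ih =>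
    rw [hrec1 (k + 1) k.succ_pos, Nat.add_sub_cancel, ih (k.le_succ.trans ht), hs2 k ht,
      show (0 : ℝ) + b1 * -1 + b1 = 0 by ring, hardSat_zero]

theorem rnn2d_noise_suppression
    (n L : ℕ) (hL1 : 1 ≤ L) (hLn : L ≤ n - 1) (hn : 2 ≤ n)
    (W21 b1 b2 : ℝ)
    (hW : W21 ∈ Set.Ioo (0 : ℝ) 1) (hb2 : b2 < 0)
    (hsat1 : W21 + b2 < -1) (hsat2 : -W21 + b2 < -1)
    (hb1 : b1 ≠ 0)
    (hp : b1 * (1 + W21) ∈ Set.Ioo (-1 : ℝ) 1)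
    (hm : b1 * (1 - W21) ∈ Set.Ioo (-1 : ℝ) 1)
    (xI xF : ℕ → ℝ)
    (hxI : ∀ t, xI t = -1 ∨ xI t = 1)
    (hxF : ∀ t, xF t = if t = L then 1 else 0)
    (s1 s2 : ℕ → ℝ)
    (hs10 : s1 0 = 0) (hs20 : s2 0 = -1)
    (hrec1 : ∀ t, 1 ≤ t → s1 t = hardSat (s1 (t - 1) + b1 * s2 (t - 1) + b1))
    (hrec2 : ∀ t, 1 ≤ t → s2 t = hardSat (W21 * xI t - b2 * xF t + b2)) :
    (∀ t, t ≤ L → s1 t = 0) ∧ (∀ t, t < L → s2 t = -1) :=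
  rnn2d_noise_suppression_general L W21 b1 b2 hsat1 hsat2 xI xF hxI hxF s1 s2 hs10 hs20 hrec1 hrec2
end

section
/- With the setup of the previous statement (fixed flag location L = n, i.e. flag at the last time step), conditioned on X_L = +1 the state S_n = A·X_L + (1−A)·Σ_{t=1}^{n−1} A^{n−t}·X_t satisfies S_n > 0 with probability at least 1 − (1−A)/(A²(1+A)) by Chebyshev's inequality, and this lower bound tends to 1 as A → 1. -/
open MeasureTheory ProbabilityTheory Filter

/-! Write `T = ∑_{t=1}^{n-1} A^{n-t} X_t`, so that `S = A X_n + (1 - A) T`. On `{X_n = 1}` we have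
`S > 0` as soon as `T > -c` with `c = A / (1 - A)`. Since `T` is independent of `X_n`, has mean
`0` and variance `∑ A^{2(n-t)} ≤ 1 / (1 - A²)`, Chebyshev's inequality bounds the probability of
`T ≤ -c` by `1 / ((1 - A²) c²) = (1 - A) / (A² (1 + A))`. -/

lemma sum_pow_sub_le_of_subset_range {r : ℝ} (h0 : 0 ≤ r) (h1 : r < 1) {n : ℕ}
    {s : Finset ℕ} (hs : s ⊆ Finset.range (n + 1)) :
    ∑ t ∈ s, r ^ (n - t) ≤ (1 - r)⁻¹ :=
  calc ∑ t ∈ s, r ^ (n - t)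
      ≤ ∑ t ∈ Finset.range (n + 1), r ^ (n - t) :=
        Finset.sum_le_sum_of_subset_of_nonneg hs fun _ _ _ ↦ pow_nonneg h0 _
    _ = ∑ t ∈ Finset.range (n + 1), r ^ t := by
        simpa using Finset.sum_range_reflect (fun t ↦ r ^ t) (n + 1)
    _ ≤ (1 - r)⁻¹ := by
        simpa [← Finset.range_eq_Ico] using geom_sum_Ico_le_of_lt_one (m := 0) (n := n + 1) h0 h1

namespace ProbabilityTheory

variable {Ω : Type*} [MeasurableSpace Ω] {μ : Measure Ω}

section PlusMinusOne

variable [IsProbabilityMeasure μ] {f : Ω → ℝ}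

lemma ae_eq_one_or_eq_neg_one (hf : Measurable f)
    (h1 : μ {ω | f ω = 1} = 1 / 2) (h2 : μ {ω | f ω = -1} = 1 / 2) :
    ∀ᵐ ω ∂μ, f ω = 1 ∨ f ω = -1 := by
  have hdisj : Disjoint {ω | f ω = 1} {ω | f ω = -1} :=
    Set.disjoint_left.mpr fun ω h1 h2 ↦ by norm_num [Set.mem_ofPred_eq.mp h1] at h2
  have hmeas : MeasurableSet {ω | f ω = 1 ∨ f ω = -1} :=
    (hf (measurableSet_singleton 1)).union (hf (measurableSet_singleton (-1)))
  have hfull : μ {ω | f ω = 1 ∨ f ω = -1} = 1 := by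
    rw [Set.ofPred_or, measure_union hdisj (hf (measurableSet_singleton (-1))), h1, h2,
      ENNReal.add_halves]
  rw [ae_iff, ← Set.compl_ofPred, prob_compl_eq_zero_iff hmeas]
  exact hfull

lemma integral_eq_zero_of_measure_eq_half (hf : Measurable f)
    (h1 : μ {ω | f ω = 1} = 1 / 2) (h2 : μ {ω | f ω = -1} = 1 / 2) :
    μ[f] = 0 := by
  have hm1 : MeasurableSet {ω | f ω = 1} := hf (measurableSet_singleton 1)
  have hm2 : MeasurableSet {ω | f ω = -1} := hf (measurableSet_singleton (-1))
  have hsplit : f =ᵐ[μ] fun ω ↦ {ω | f ω = 1}.indicator 1 ω - {ω | f ω = -1}.indicator 1 ω := by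
    filter_upwards [ae_eq_one_or_eq_neg_one hf h1 h2] with ω h
    rcases h with h | h <;> norm_num [Set.indicator_apply, h]
  rw [integral_congr_ae hsplit, integral_sub ((integrable_const 1).indicator hm1)
    ((integrable_const 1).indicator hm2), integral_indicator_one hm1, integral_indicator_one hm2,
    measureReal_def, measureReal_def, h1, h2, sub_self]

lemma memLp_two_of_measure_eq_half (hf : Measurable f)
    (h1 : μ {ω | f ω = 1} = 1 / 2) (h2 : μ {ω | f ω = -1} = 1 / 2) :
    MemLp f 2 μ := by
  refine memLp_of_bounded (a := -1) (b := 1) ?_ hf.aestronglyMeasurable 2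
  filter_upwards [ae_eq_one_or_eq_neg_one hf h1 h2] with ω h
  rcases h with h | h <;> simp [h]

lemma variance_eq_one_of_measure_eq_half (hf : Measurable f)
    (h1 : μ {ω | f ω = 1} = 1 / 2) (h2 : μ {ω | f ω = -1} = 1 / 2) :
    Var[f; μ] = 1 := by
  have hsq : f ^ 2 =ᵐ[μ] fun _ ↦ 1 := by
    filter_upwards [ae_eq_one_or_eq_neg_one hf h1 h2] with ω h
    rcases h with h | h <;> simp [h]
  rw [variance_eq_sub (memLp_two_of_measure_eq_half hf h1 h2),
    integral_eq_zero_of_measure_eq_half hf h1 h2, integral_congr_ae hsq]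
  simp

end PlusMinusOne

lemma IndepFun.cond_preimage_eq {β γ : Type*} [MeasurableSpace β] [MeasurableSpace γ]
    [IsFiniteMeasure μ] {T : Ω → β} {Y : Ω → γ} (h : T ⟂ᵢ[μ] Y) (hY : Measurable Y)
    {s : Set β} {t : Set γ} (hs : MeasurableSet s) (ht : MeasurableSet t)
    (h0 : μ (Y ⁻¹' t) ≠ 0) :
    μ[T ⁻¹' s | Y ⁻¹' t] = μ (T ⁻¹' s) := by
  rw [cond_apply (hY ht), Set.inter_comm, h.measure_inter_preimage_eq_mul _ _ hs ht,
    mul_comm (μ (T ⁻¹' s)), ← mul_assoc, ENNReal.inv_mul_cancel h0 (measure_ne_top _ _), one_mul]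

section WeightedSum

variable {ι : Type*} {X : ι → Ω → ℝ} (w : ι → ℝ) (s : Finset ι)

lemma iIndepFun.indepFun_sum_const_mul_of_notMem (hX : iIndepFun X μ)
    (hmeas : ∀ i, Measurable (X i)) {i : ι} (hi : i ∉ s) :
    (fun ω ↦ ∑ j ∈ s, w j * X j ω) ⟂ᵢ[μ] X i := by
  classical
  -- `X i` itself, not `w i * X i` (which may vanish), has to occur in the rescaled family
  let φ : ι → ℝ → ℝ := fun j x ↦ if j = i then x else w j * x
  have hφ : ∀ j, Measurable (φ j) := fun j ↦ by
    by_cases hj : j = i <;> simp only [φ, hj, if_true, if_false] <;> fun_prop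
  have h := (hX.comp φ hφ).indepFun_finsetSum_of_notMem (fun j ↦ (hφ j).comp (hmeas j)) hi
  convert h using 1
  · ext ω
    rw [Finset.sum_apply]
    refine Finset.sum_congr rfl fun j hj ↦ ?_
    simp [φ, show j ≠ i from fun h ↦ hi (h ▸ hj)]
  · ext ω
    simp [φ]

lemma integral_sum_const_mul_eq_zero (hint : ∀ i, Integrable (X i) μ)
    (hmean : ∀ i, μ[X i] = 0) :
    μ[fun ω ↦ ∑ j ∈ s, w j * X j ω] = 0 := by
  rw [integral_finsetSum s fun j _ ↦ (hint j).const_mul (w j)]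
  simp [integral_const_mul, hmean]

lemma iIndepFun.variance_sum_const_mul (hX : iIndepFun X μ) (hL2 : ∀ i, MemLp (X i) 2 μ) :
    Var[fun ω ↦ ∑ j ∈ s, w j * X j ω; μ] = ∑ j ∈ s, w j ^ 2 * Var[X j; μ] := by
  have hind := hX.comp (fun j x ↦ w j * x) fun j ↦ measurable_const_mul (w j)
  have h := IndepFun.variance_sum (s := s) (fun j _ ↦ (hL2 j).const_mul (w j))
    fun j _ k _ hjk ↦ hind.indepFun hjk
  convert h using 2 with j
  · ext ω
    simp [Finset.sum_apply]
  · exact (variance_smul (w j) (X j) μ).symm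

end WeightedSum

lemma ofReal_one_sub_variance_div_sq_le_measure_neg_lt [IsProbabilityMeasure μ] {T : Ω → ℝ}
    (hT : MemLp T 2 μ) (hmean : μ[T] = 0) {c : ℝ} (hc : 0 < c) :
    ENNReal.ofReal (1 - Var[T; μ] / c ^ 2) ≤ μ {ω | -c < T ω} := by
  have htail : {ω | -c < T ω}ᶜ ⊆ {ω | c ≤ |T ω - μ[T]|} := fun ω hω ↦ by
    simp only [Set.mem_compl_iff, Set.mem_ofPred_eq, not_lt, hmean, sub_zero] at hω ⊢
    exact le_abs.mpr (Or.inr (by linarith))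
  have hcover : 1 ≤ μ {ω | -c < T ω} + μ {ω | -c < T ω}ᶜ := by
    simpa using measure_univ_le_add_compl {ω | -c < T ω} (μ := μ)
  calc ENNReal.ofReal (1 - Var[T; μ] / c ^ 2)
      = 1 - ENNReal.ofReal (Var[T; μ] / c ^ 2) := by
        rw [ENNReal.ofReal_sub _ (by have := variance_nonneg T μ; positivity), ENNReal.ofReal_one]
    _ ≤ 1 - μ {ω | -c < T ω}ᶜ :=
        tsub_le_tsub_left ((measure_mono htail).trans (meas_ge_le_variance_div_sq hT hc)) 1
    _ ≤ μ {ω | -c < T ω} := tsub_le_iff_right.mpr hcover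

end ProbabilityTheory

noncomputable def discountedPast {Ω : Type*} (A : ℝ) (n : ℕ) (X : ℕ → Ω → ℝ) (ω : Ω) : ℝ :=
  ∑ t ∈ Finset.Icc 1 (n - 1), A ^ (n - t) * X t ω

section DiscountedPast

variable {Ω : Type*} [MeasurableSpace Ω] {μ : Measure Ω} [IsProbabilityMeasure μ]
  {X : ℕ → Ω → ℝ} (hmeas : ∀ t, Measurable (X t)) (hindep : iIndepFun X μ)
  (hunif : ∀ t, μ {ω | X t ω = 1} = 1 / 2 ∧ μ {ω | X t ω = -1} = 1 / 2)
  {A : ℝ} (n : ℕ)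
include hmeas hunif

lemma integral_discountedPast : μ[discountedPast A n X] = 0 :=
  integral_sum_const_mul_eq_zero _ _
    (fun t ↦ (memLp_two_of_measure_eq_half (hmeas t) (hunif t).1 (hunif t).2).integrable
      one_le_two)
    fun t ↦ integral_eq_zero_of_measure_eq_half (hmeas t) (hunif t).1 (hunif t).2

include hindep in
lemma variance_discountedPast_le (hA : |A| < 1) : Var[discountedPast A n X; μ] ≤ (1 - A ^ 2)⁻¹ :=
  calc Var[discountedPast A n X; μ] = ∑ t ∈ Finset.Icc 1 (n - 1), (A ^ 2) ^ (n - t) := by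
        unfold discountedPast
        rw [hindep.variance_sum_const_mul _ _
          fun t ↦ memLp_two_of_measure_eq_half (hmeas t) (hunif t).1 (hunif t).2]
        refine Finset.sum_congr rfl fun t _ ↦ ?_
        rw [variance_eq_one_of_measure_eq_half (hmeas t) (hunif t).1 (hunif t).2, mul_one,
          ← pow_mul, mul_comm, pow_mul]
    _ ≤ (1 - A ^ 2)⁻¹ :=
        sum_pow_sub_le_of_subset_range (sq_nonneg A) ((sq_lt_one_iff_abs_lt_one A).2 hA)
          fun t ht ↦ by simp only [Finset.mem_Icc, Finset.mem_range] at ht ⊢; omega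

include hindep in
lemma ofReal_le_measure_discountedPast_gt (hA0 : 0 < A) (hA1 : A < 1) :
    ENNReal.ofReal (1 - (1 - A) / (A ^ 2 * (1 + A)))
      ≤ μ {ω | -(A / (1 - A)) < discountedPast A n X ω} := by
  have hA : 1 - A ≠ 0 := (sub_pos.2 hA1).ne'
  have hε : (1 - A ^ 2)⁻¹ / (A / (1 - A)) ^ 2 = (1 - A) / (A ^ 2 * (1 + A)) := by
    rw [show 1 - A ^ 2 = (1 - A) * (1 + A) by ring]
    field_simp
  calc ENNReal.ofReal (1 - (1 - A) / (A ^ 2 * (1 + A)))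
      ≤ ENNReal.ofReal (1 - Var[discountedPast A n X; μ] / (A / (1 - A)) ^ 2) := by
        rw [← hε]
        gcongr
        exact variance_discountedPast_le hmeas hindep hunif n (abs_lt.2 ⟨by linarith, hA1⟩)
    _ ≤ μ {ω | -(A / (1 - A)) < discountedPast A n X ω} :=
        ofReal_one_sub_variance_div_sq_le_measure_neg_lt
          (memLp_finsetSum _ fun t _ ↦
            (memLp_two_of_measure_eq_half (hmeas t) (hunif t).1 (hunif t).2).const_mul _)
          (integral_discountedPast hmeas hunif n) (div_pos hA0 (by linarith))

end DiscountedPast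

theorem gru_chebyshev_bound_general
    {Ω : Type*} [MeasurableSpace Ω] (μ : Measure Ω) [IsProbabilityMeasure μ]
    (n : ℕ)
    (A : ℝ) (hA : A ∈ Set.Ioo (0 : ℝ) 1)
    (X : ℕ → Ω → ℝ) (hmeas : ∀ t, Measurable (X t))
    (hindep : iIndepFun X μ)
    (hunif : ∀ t, μ {ω | X t ω = 1} = 1/2 ∧ μ {ω | X t ω = -1} = 1/2)
    (S : Ω → ℝ)
    (hS : ∀ ω, S ω = A * X n ω
        + (1 - A) * ∑ t ∈ Finset.Icc 1 (n - 1), A ^ (n - t) * X t ω) :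
    ENNReal.ofReal (1 - (1 - A) / (A ^ 2 * (1 + A)))
      ≤ (μ[|{ω | X n ω = 1}]) {ω | S ω > 0} ∧
    Tendsto (fun a : ℝ => 1 - (1 - a) / (a ^ 2 * (1 + a)))
      (nhdsWithin 1 (Set.Iio 1)) (nhds 1) := by
  obtain ⟨hA0, hA1⟩ := hA
  refine ⟨?_, ?_⟩
  swap
  · have hcont : ContinuousAt (fun a : ℝ => 1 - (1 - a) / (a ^ 2 * (1 + a))) 1 := by
      fun_prop (disch := norm_num)
    simpa using hcont.tendsto.mono_left nhdsWithin_le_nhds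
  set T := discountedPast A n X
  set G := T ⁻¹' Set.Ioi (-(A / (1 - A)))
  have hindepT : T ⟂ᵢ[μ] X n :=
    hindep.indepFun_sum_const_mul_of_notMem _ _ hmeas (by simp only [Finset.mem_Icc]; omega)
  have hpos : X n ⁻¹' {1} ∩ G ⊆ {ω | S ω > 0} := by
    rintro ω ⟨hXn, hTω⟩
    simp only [Set.mem_preimage, Set.mem_singleton_iff, Set.mem_Ioi, G] at hXn hTω
    have hcA : (1 - A) * (A / (1 - A)) = A := mul_div_cancel₀ A (sub_pos.2 hA1).ne'
    rw [Set.mem_ofPred_eq, gt_iff_lt, hS ω, hXn]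
    change 0 < A * 1 + (1 - A) * T ω
    nlinarith [mul_lt_mul_of_pos_left hTω (sub_pos.2 hA1)]
  calc ENNReal.ofReal (1 - (1 - A) / (A ^ 2 * (1 + A)))
      ≤ μ G := ofReal_le_measure_discountedPast_gt hmeas hindep hunif n hA0 hA1
    _ = μ[G | X n ⁻¹' {1}] :=
        (hindepT.cond_preimage_eq (hmeas n) measurableSet_Ioi (measurableSet_singleton 1)
          (by simp [Set.preimage, (hunif n).1])).symm
    _ = μ[X n ⁻¹' {1} ∩ G | X n ⁻¹' {1}] :=
        (cond_inter_self (hmeas n (measurableSet_singleton 1)) _ _).symm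
    _ ≤ μ[{ω | S ω > 0} | X n ⁻¹' {1}] := measure_mono hpos

theorem gru_chebyshev_bound
    {Ω : Type*} [MeasurableSpace Ω] (μ : Measure Ω) [IsProbabilityMeasure μ]
    (n : ℕ) (hn : 1 ≤ n)
    (A : ℝ) (hA : A ∈ Set.Ioo (0 : ℝ) 1)
    (X : ℕ → Ω → ℝ) (hmeas : ∀ t, Measurable (X t))
    (hindep : iIndepFun X μ)
    (hunif : ∀ t, μ {ω | X t ω = 1} = 1/2 ∧ μ {ω | X t ω = -1} = 1/2)
    (S : Ω → ℝ)
    (hS : ∀ ω, S ω = A * X n ω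
        + (1 - A) * ∑ t ∈ Finset.Icc 1 (n - 1), A ^ (n - t) * X t ω) :
    ENNReal.ofReal (1 - (1 - A) / (A ^ 2 * (1 + A)))
      ≤ (μ[|{ω | X n ω = 1}]) {ω | S ω > 0} ∧
    Tendsto (fun a : ℝ => 1 - (1 - a) / (a ^ 2 * (1 + a)))
      (nhdsWithin 1 (Set.Iio 1)) (nhds 1) :=
  gru_chebyshev_bound_general μ n A hA X hmeas hindep hunif S hS
end

section
/- Fix n ≥ 1. For the scalar GRU-construction state S_n = A^{n−L+1} X_L + (1−A) Σ_{t≠L} A^{n−t} X_t with X_t i.i.d. uniform ±1 and L fixed: for any ε > 0 there exists A ∈ (0,1) such that P(sign(S_n) ≠ X_L) = 0. Indeed, choosing A close enough to 1 so that A^n > 1 − A^n (i.e., A^n > 1/2) guarantees that the feature term A^{n−L+1} X_L ≥ A^n dominates the noise term, whose absolute value is strictly less than (1−A)Σ_{k=0}^{n−1} A^k = 1 − A^n, hence sign(S_n) = X_L surely. -/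
open Finset Filter Topology

theorem one_sub_mul_sum_Icc_pow_sub {R : Type*} [CommRing R] (A : R) (n : ℕ) :
    (1 - A) * ∑ t ∈ Icc 1 n, A ^ (n - t) = 1 - A ^ n := by
  rw [← Ico_add_one_right_eq_Icc, sum_Ico_reflect _ _ le_rfl, Nat.add_sub_cancel, Nat.sub_self,
    ← range_eq_Ico, mul_neg_geom_sum]

theorem abs_sum_mul_le_sum_of_abs_le_one {ι : Type*} (s : Finset ι) {w x : ι → ℝ}
    (hw : ∀ t ∈ s, 0 ≤ w t) (hx : ∀ t ∈ s, |x t| ≤ 1) :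
    |∑ t ∈ s, w t * x t| ≤ ∑ t ∈ s, w t :=
  (abs_sum_le_sum_abs _ _).trans <| sum_le_sum fun t ht => by
    rw [abs_mul, abs_of_nonneg (hw t ht)]
    exact mul_le_of_le_one_right (hw t ht) (hx t ht)

theorem Real.sign_mul_add_of_abs_lt {a b x : ℝ} (hx : x = -1 ∨ x = 1) (hb : |b| < a) :
    Real.sign (a * x + b) = x := by
  obtain ⟨hb₁, hb₂⟩ := abs_lt.mp hb
  rcases hx with rfl | rfl
  · exact Real.sign_of_neg (by linarith)
  · exact Real.sign_of_pos (by linarith)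

theorem exists_mem_Ioo_lt_pow {c : ℝ} (hc : c < 1) (n : ℕ) :
    ∃ A ∈ Set.Ioo (0 : ℝ) 1, c < A ^ n := by
  have hpow : Tendsto (fun A : ℝ => A ^ n) (𝓝[<] 1) (𝓝 1) := by
    simpa using ((continuous_pow n).tendsto (1 : ℝ)).mono_left nhdsWithin_le_nhds
  obtain ⟨A, hcA, hA⟩ :=
    ((hpow.eventually (lt_mem_nhds hc)).and (Ioo_mem_nhdsLT zero_lt_one)).exists
  exact ⟨A, hA, hcA⟩

theorem gru_passes_F1B_scalar_general
    (n L : ℕ) (hL : L ∈ Finset.Icc 1 n) :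
    ∀ ε : ℝ, 0 < ε → ∃ A ∈ Set.Ioo (0 : ℝ) 1,
      A ^ n > 1 - A ^ n ∧
      ∀ x : ℕ → ℝ, (∀ t, x t = -1 ∨ x t = 1) →
        Real.sign (A ^ (n - L + 1) * x L
          + (1 - A) * ∑ t ∈ Finset.Icc 1 n \ {L}, A ^ (n - t) * x t) = x L := by
  intro _ _
  obtain ⟨hL₁, hLn⟩ := mem_Icc.mp hL
  obtain ⟨A, ⟨hA0, hA1⟩, hAn⟩ := exists_mem_Ioo_lt_pow (c := 1 / 2) (by norm_num) n
  refine ⟨A, ⟨hA0, hA1⟩, by linarith, fun x hx => Real.sign_mul_add_of_abs_lt (hx L) ?_⟩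
  have hw : ∀ t, 0 ≤ A ^ (n - t) := fun t => pow_nonneg hA0.le _
  have hx₁ : ∀ t, |x t| ≤ 1 := fun t => by rcases hx t with h | h <;> simp [h]
  calc |(1 - A) * ∑ t ∈ Icc 1 n \ {L}, A ^ (n - t) * x t|
      = (1 - A) * |∑ t ∈ Icc 1 n \ {L}, A ^ (n - t) * x t| := by
        rw [abs_mul, abs_of_pos (sub_pos.mpr hA1)]
    _ ≤ (1 - A) * ∑ t ∈ Icc 1 n \ {L}, A ^ (n - t) := by
        gcongr; exact abs_sum_mul_le_sum_of_abs_le_one _ (fun t _ => hw t) (fun t _ => hx₁ t)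
    _ ≤ (1 - A) * ∑ t ∈ Icc 1 n, A ^ (n - t) := by
        gcongr; exact sdiff_subset
    _ = 1 - A ^ n := one_sub_mul_sum_Icc_pow_sub A n
    _ < A ^ n := by linarith
    _ ≤ A ^ (n - L + 1) := pow_le_pow_of_le_one hA0.le hA1.le (by omega)

theorem gru_passes_F1B_scalar
    (n L : ℕ) (hn : 1 ≤ n) (hL : L ∈ Finset.Icc 1 n) :
    ∀ ε : ℝ, 0 < ε → ∃ A ∈ Set.Ioo (0 : ℝ) 1,
      A ^ n > 1 - A ^ n ∧
      ∀ x : ℕ → ℝ, (∀ t, x t = -1 ∨ x t = 1) →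
        Real.sign (A ^ (n - L + 1) * x L
          + (1 - A) * ∑ t ∈ Finset.Icc 1 n \ {L}, A ^ (n - t) * x t) = x L :=
  gru_passes_F1B_scalar_general n L hL
end
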